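/- arXiv:math/9807033 — 2 statements merged into one kernel-verified Lean document; each statement's English description precedes it below -/
import Mathlib

section
/- Every finite tree is the intersection graph of some chord diagram. -/
/-- A chord diagram of degree `n`: a perfect matching on `ZMod (2*n)`, encoded as a
fixed-point-free involution pairing each endpoint with the other end of its chord. -/
structure ChordDiagram (n : ℕ) where
  f : ZMod (2 * n) → ZMod (2 * n)
  invol : ∀ k, f (f k) = k
  noFix : ∀ k, f k ≠ k

namespace ChordDiagram

/-- `x` lies strictly inside the cyclic interval from `a` to `b`. -/
def between {N : ℕ} (a x b : ZMod N) : Prop :=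
  0 < (x - a).val ∧ (x - a).val < (b - a).val

/-- The chords `{a, a'}` and `{b, b'}` intersect: exactly one of `b, b'` lies in the
cyclic interval from `a` to `a'`. -/
def alternate {N : ℕ} (a a' b b' : ZMod N) : Prop :=
  Xor' (between a b a') (between a b' a')

/-- The chords of a chord diagram, as two-element sets of endpoints. -/
def Chord {n : ℕ} (D : ChordDiagram n) : Type :=
  {s : Finset (ZMod (2 * n)) // ∃ k, s = {k, D.f k}}

/-- The intersection graph of a chord diagram: one vertex per chord, with edges
between chords whose endpoints alternate around the circle. -/
def graph {n : ℕ} (D : ChordDiagram n) : SimpleGraph D.Chord :=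
  SimpleGraph.fromRel fun s t =>
    ∃ a b, s.1 = {a, D.f a} ∧
      t.1 = {b, D.f b} ∧ alternate a (D.f a) b (D.f b)

end ChordDiagram


def Il (p q : ℕ × ℕ) : Prop :=
  (p.1 < q.1 ∧ q.1 < p.2 ∧ p.2 < q.2) ∨ (q.1 < p.1 ∧ p.1 < q.2 ∧ q.2 < p.2)

lemma Il_symm {p q : ℕ × ℕ} : Il p q ↔ Il q p := by unfold Il; tauto

structure Layout (V : Type) [Fintype V] (G : SimpleGraph V) where
  e : V × Bool → ℕ
  inj : Function.Injective e
  lt : ∀ x, e x < 2 * Fintype.card V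
  ord : ∀ v, e (v, false) < e (v, true)
  adj : ∀ u v, G.Adj u v ↔
    Il (e (u, false), e (u, true)) (e (v, false), e (v, true))

section Leaf
variable {V : Type} {G : SimpleGraph V} {v u : V}

lemma leaf_avoid (hleaf : ∀ y, G.Adj v y ↔ y = u) :
    ∀ {a b : V} (p : G.Walk a b), p.IsPath → a ≠ v → b ≠ v → v ∉ p.support := by
  intro a b p
  induction p with
  | nil =>
    intro _ ha _
    simp [SimpleGraph.Walk.support_nil]
    exact fun h => ha h.symm
  | @cons a c b h q ih =>
    intro hp ha hb
    simp only [SimpleGraph.Walk.support_cons, List.mem_cons]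
    push_neg
    refine ⟨fun hv => ha hv.symm, ?_⟩
    by_cases hc : c = v
    · subst hc
      cases q with
      | nil => exact absurd rfl hb
      | @cons _ d _ h2 q2 =>
        exfalso
        have hd : d = u := (hleaf d).mp h2
        have hau : a = u := (hleaf a).mp h.symm
        have : a ∉ (SimpleGraph.Walk.cons h2 q2).support := by
          have := hp.support_nodup
          simp only [SimpleGraph.Walk.support_cons, List.nodup_cons] at this
          exact this.1
        apply this
        rw [hau, ← hd]
        simp [SimpleGraph.Walk.support_cons]
    · exact ih hp.of_cons hc hb

lemma reach_lift :
    ∀ {a b : V} (p : G.Walk a b) (ha : a ≠ v) (hb : b ≠ v), v ∉ p.support →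
      (G.comap (Function.Embedding.subtype (· ≠ v))).Reachable ⟨a, ha⟩ ⟨b, hb⟩ := by
  intro a b p
  induction p with
  | nil => intro ha hb _; exact SimpleGraph.Reachable.refl _
  | @cons a c b h q ih =>
    intro ha hb hs
    simp only [SimpleGraph.Walk.support_cons, List.mem_cons] at hs
    push_neg at hs
    have hc : c ≠ v := fun hcv => hs.2 (hcv ▸ SimpleGraph.Walk.start_mem_support q)
    refine SimpleGraph.Reachable.trans (SimpleGraph.Adj.reachable ?_) (ih hc hb hs.2)
    simpa [SimpleGraph.comap_adj] using h

lemma subtree_isTree (hT : G.IsTree) (hleaf : ∀ y, G.Adj v y ↔ y = u) :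
    (G.comap (Function.Embedding.subtype (· ≠ v))).IsTree := by
  classical
  have huv : u ≠ v := fun h => G.irrefl (h ▸ (hleaf u).mpr rfl)
  haveI : Nonempty {x // x ≠ v} := ⟨⟨u, huv⟩⟩
  constructor
  · exact SimpleGraph.Connected.mk (by
      rintro ⟨a, ha⟩ ⟨b, hb⟩
      obtain ⟨w⟩ := hT.isConnected.preconnected a b
      obtain ⟨p, hp⟩ := w.toPath
      exact reach_lift p ha hb (leaf_avoid hleaf p hp ha hb))
  · intro x c hc
    have hinj : Function.Injective
        ⇑(SimpleGraph.Embedding.comap (Function.Embedding.subtype (· ≠ v)) G).toHom :=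
      (SimpleGraph.Embedding.comap (Function.Embedding.subtype (· ≠ v)) G).injective
    exact hT.IsAcyclic _ (hc.map hinj)
end Leaf

lemma exists_leaf (V : Type) [Fintype V] [DecidableEq V] (G : SimpleGraph V)
    [DecidableRel G.Adj] (hT : G.IsTree)
    (h2 : 2 ≤ Fintype.card V) : ∃ v, G.degree v = 1 := by
  classical
  have hedge : G.edgeFinset.card + 1 = Fintype.card V := hT.card_edgeFinset
  have hsum : ∑ w, G.degree w = 2 * G.edgeFinset.card :=
    SimpleGraph.sum_degrees_eq_twice_card_edges G
  have hpos : ∀ w : V, 0 < G.degree w := by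
    intro w
    rw [SimpleGraph.degree_pos_iff_exists_adj]
    obtain ⟨x, hx⟩ := Fintype.exists_ne_of_one_lt_card (by omega) w
    obtain ⟨p⟩ := hT.isConnected.preconnected w x
    cases p with
    | nil => exact absurd rfl hx.symm
    | cons h _ => exact ⟨_, h⟩
  by_contra hno
  push_neg at hno
  have h2' : ∀ w : V, 2 ≤ G.degree w := by
    intro w; have := hpos w; have := hno w; omega
  have : 2 * Fintype.card V ≤ ∑ w, G.degree w := by
    calc 2 * Fintype.card V = ∑ _w : V, 2 := by simp [mul_comm]
    _ ≤ ∑ w, G.degree w := Finset.sum_le_sum fun w _ => h2' w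
  omega

lemma layout_exists : ∀ (n : ℕ) (V : Type) [Fintype V] (G : SimpleGraph V),
    G.IsTree → Fintype.card V = n → Nonempty (Layout V G) := by
  intro n
  induction n using Nat.strong_induction_on with
  | _ n ih =>
    intro V _ G hT hcard
    classical
    have hne : Nonempty V := hT.isConnected.nonempty
    have hpos : 1 ≤ Fintype.card V := Fintype.card_pos
    by_cases h1 : Fintype.card V = 1
    · -- single vertex
      have hsub : Subsingleton V := Fintype.card_le_one_iff_subsingleton.mp (le_of_eq h1)
      refine ⟨⟨fun x => if x.2 then 1 else 0, ?_, ?_, ?_, ?_⟩⟩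
      · rintro ⟨x, s⟩ ⟨y, t⟩ h
        have hxy : x = y := Subsingleton.elim x y
        subst hxy
        cases s <;> cases t
        · rfl
        · simp at h
        · simp at h
        · rfl
      · rintro ⟨x, s⟩; rw [h1]; cases s <;> simp
      · intro w; simp
      · intro a b
        have hab : a = b := Subsingleton.elim a b
        subst hab
        simp only [SimpleGraph.irrefl, false_iff]
        unfold Il
        simp
    · -- at least two vertices: remove a leaf
      have h2 : 2 ≤ Fintype.card V := by omega
      obtain ⟨v, hv⟩ := exists_leaf V G hT h2
      obtain ⟨u, hu⟩ := Finset.card_eq_one.mp (by rwa [SimpleGraph.degree] at hv)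
      have hleaf : ∀ y, G.Adj v y ↔ y = u := by
        intro y
        rw [← SimpleGraph.mem_neighborFinset, hu, Finset.mem_singleton]
      have huv : u ≠ v := fun h => G.irrefl (h ▸ (hleaf u).mpr rfl)
      set G' := G.comap (Function.Embedding.subtype (· ≠ v)) with hG'
      have hT' : G'.IsTree := subtree_isTree hT hleaf
      have hcard' : Fintype.card {x // x ≠ v} = n - 1 := by
        have h' := Fintype.card_subtype_compl (fun x : V => x = v)
        have h'' : Fintype.card {x // x ≠ v} = Fintype.card {x // ¬ x = v} :=
          Fintype.card_congr (Equiv.subtypeEquivRight fun x => Iff.rfl)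
        rw [Fintype.card_subtype_eq] at h'
        omega
      obtain ⟨L⟩ := ih (n - 1) (by omega) {x // x ≠ v} G' hT' hcard'
      have hn2 : 2 ≤ n := hcard ▸ h2
      set u' : {x // x ≠ v} := ⟨u, huv⟩ with hu'
      set u1 := L.e (u', false) with hu1
      set σ : ℕ → ℕ := fun x => if x < u1 then x else if x = u1 then x + 1 else x + 2 with hσ
      have hσlt : ∀ x y, σ x < σ y ↔ x < y := by
        intro x y; simp only [hσ]; split_ifs <;> omega
      have hσval : ∀ x, (σ x = u1 + 1 ↔ x = u1) ∧ σ x ≠ u1 ∧ σ x ≠ u1 + 2 ∧ σ x ≤ x + 2 := by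
        intro x; simp only [hσ]; split_ifs <;> omega
      have hσadd : ∀ x, u1 < x → σ x = x + 2 := by
        intro x hx; simp only [hσ]; split_ifs <;> omega
      have hlt' : ∀ x, L.e x < 2 * (n - 1) := by
        intro x; have := L.lt x; rwa [hcard'] at this
      set E : V × Bool → ℕ := fun p =>
        if h : p.1 = v then (if p.2 then u1 + 2 else u1)
        else σ (L.e (⟨p.1, h⟩, p.2)) with hE
      have hEvf : E (v, false) = u1 := by
        simp [hE]
      have hEvt : E (v, true) = u1 + 2 := by
        simp [hE]
      have hEw : ∀ (w : V) (hw : w ≠ v) (s : Bool), E (w, s) = σ (L.e (⟨w, hw⟩, s)) := by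
        intro w hw s; simp only [hE]; rw [dif_neg hw]
      refine ⟨⟨E, ?_, ?_, ?_, ?_⟩⟩
      · -- injectivity
        rintro ⟨x, s⟩ ⟨y, t⟩ h
        by_cases hx : x = v <;> by_cases hy : y = v
        · subst hx; subst hy
          cases s <;> cases t
          · rfl
          · rw [hEvf, hEvt] at h; exact absurd h (by omega)
          · rw [hEvt, hEvf] at h; exact absurd h (by omega)
          · rfl
        · exfalso
          subst hx
          rw [hEw y hy] at h
          cases s
          · rw [hEvf] at h; exact (hσval _).2.1 h.symm
          · rw [hEvt] at h; exact (hσval _).2.2.1 h.symm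
        · exfalso
          subst hy
          rw [hEw x hx] at h
          cases t
          · rw [hEvf] at h; exact (hσval _).2.1 h
          · rw [hEvt] at h; exact (hσval _).2.2.1 h
        · rw [hEw x hx, hEw y hy] at h
          have h1 : L.e (⟨x, hx⟩, s) = L.e (⟨y, hy⟩, t) := by
            rcases lt_trichotomy (L.e (⟨x, hx⟩, s)) (L.e (⟨y, hy⟩, t)) with h' | h' | h'
            · have := (hσlt _ _).mpr h'; omega
            · exact h'
            · have := (hσlt _ _).mpr h'; omega
          have h2' := L.inj h1
          have hxy : x = y := congrArg (fun q => (Subtype.val q.1)) h2'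
          have hst : s = t := congrArg Prod.snd h2'
          rw [hxy, hst]
      · -- bounds
        rintro ⟨x, s⟩
        rw [hcard]
        by_cases hx : x = v
        · subst hx
          have := hlt' (u', false)
          cases s
          · rw [hEvf]; omega
          · rw [hEvt]; omega
        · rw [hEw x hx]
          have := hlt' (⟨x, hx⟩, s)
          have := (hσval (L.e (⟨x, hx⟩, s))).2.2.2
          omega
      · -- order
        intro w
        by_cases hw : w = v
        · subst hw; rw [hEvf, hEvt]; omega
        · rw [hEw w hw, hEw w hw]
          exact (hσlt _ _).mpr (L.ord _)
      · -- adjacency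
        have key : ∀ (b : V) (hb : b ≠ v),
            (b = u ↔ Il (u1, u1 + 2)
              (σ (L.e (⟨b, hb⟩, false)), σ (L.e (⟨b, hb⟩, true)))) := by
          intro b hb
          constructor
          · intro hbu
            have hbu' : (⟨b, hb⟩ : {x // x ≠ v}) = u' := Subtype.ext hbu
            rw [hbu']
            have hd : u1 < L.e (u', true) := L.ord u'
            have e1 : σ (L.e (u', false)) = u1 + 1 := (hσval _).1.mpr rfl
            have e2 : σ (L.e (u', true)) = L.e (u', true) + 2 := hσadd _ hd
            rw [e1, e2]
            dsimp only [Il]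
            omega
          · intro hIl
            dsimp only [Il] at hIl
            have hor : σ (L.e (⟨b, hb⟩, false)) = u1 + 1 ∨
                σ (L.e (⟨b, hb⟩, true)) = u1 + 1 := by omega
            rcases hor with h | h
            · have hc : L.e (⟨b, hb⟩, false) = L.e (u', false) := (hσval _).1.mp h
              have := L.inj hc
              exact congrArg (fun q => (Subtype.val q.1)) this
            · have hc : L.e (⟨b, hb⟩, true) = L.e (u', false) := (hσval _).1.mp h
              have := L.inj hc
              exact absurd (congrArg Prod.snd this) (by simp)
        intro a b
        by_cases ha : a = v <;> by_cases hb : b = v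
        · subst ha; subst hb
          rw [hEvf, hEvt]
          constructor
          · intro h; exact absurd h (G.irrefl)
          · intro h; exfalso; dsimp only [Il] at h; omega
        · subst ha
          rw [hEvf, hEvt, hEw b hb, hEw b hb]
          rw [hleaf b]
          exact key b hb
        · subst hb
          rw [hEvf, hEvt, hEw a ha, hEw a ha]
          rw [G.adj_comm, hleaf a, Il_symm]
          exact key a ha
        · rw [hEw a ha, hEw a ha, hEw b hb, hEw b hb]
          have hadj : G.Adj a b ↔ G'.Adj ⟨a, ha⟩ ⟨b, hb⟩ := by
            rw [hG']; simp [SimpleGraph.comap_adj]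
          rw [hadj, L.adj]
          dsimp only [Il]
          simp only [hσlt]
lemma val_sub_cast {N : ℕ} (hN : 0 < N) (a b : ℕ) (ha : a < N) (hb : b < N) :
    ((a : ZMod N) - b).val = if b ≤ a then a - b else a + N - b := by
  haveI : NeZero N := ⟨hN.ne'⟩
  split_ifs with h
  · have h2 : ((a : ZMod N) - b) = ((a - b : ℕ) : ZMod N) := by
      rw [Nat.cast_sub h]
    rw [h2, ZMod.val_cast_of_lt (by omega)]
  · have h2 : ((a : ZMod N) - b) = ((a + N - b : ℕ) : ZMod N) := by
      rw [Nat.cast_sub (by omega : b ≤ a + N), Nat.cast_add, ZMod.natCast_self, add_zero]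
    rw [h2, ZMod.val_cast_of_lt (by omega)]

lemma between_cast {N : ℕ} (hN : 0 < N) (a x b : ℕ) (ha : a < N) (hx : x < N) (hb : b < N) :
    ChordDiagram.between (a : ZMod N) x b ↔
      ((a < x ∧ (b < a ∨ x < b)) ∨ (x < a ∧ b < a ∧ x < b)) := by
  unfold ChordDiagram.between
  rw [val_sub_cast hN x a hx ha, val_sub_cast hN b a hb ha]
  split_ifs <;> omega

theorem assemble (V : Type) [Fintype V] (G : SimpleGraph V) [Nonempty V]
    (L : Layout V G) :
    ∃ (n : ℕ) (D : ChordDiagram n), Nonempty (D.graph ≃g G) := by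
  classical
  set n := Fintype.card V with hn
  have hn1 : 1 ≤ n := Fintype.card_pos
  have hN : 0 < 2 * n := by omega
  haveI : NeZero (2 * n) := ⟨by omega⟩
  set P : V × Bool → ZMod (2 * n) := fun x => (L.e x : ZMod (2 * n)) with hP
  have hPval : ∀ x, (P x).val = L.e x := fun x => ZMod.val_cast_of_lt (L.lt x)
  have hPinj : Function.Injective P := by
    intro x y h
    apply L.inj
    rw [← hPval x, ← hPval y, h]
  have hPbij : Function.Bijective P := by
    rw [Fintype.bijective_iff_injective_and_card]
    refine ⟨hPinj, ?_⟩
    simp [ZMod.card, Fintype.card_prod, mul_comm]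
    exact hn.symm
  set eqP := Equiv.ofBijective P hPbij with heqP
  have hPk : ∀ k, P (eqP.symm k) = k := fun k => eqP.apply_symm_apply k
  have hsymmP : ∀ p, eqP.symm (P p) = p := fun p => eqP.symm_apply_apply p
  set tw : V × Bool → V × Bool := fun p => (p.1, !p.2) with htw
  have htww : ∀ p, tw (tw p) = p := by intro p; simp [htw]
  set f : ZMod (2 * n) → ZMod (2 * n) := fun k => P (tw (eqP.symm k)) with hf
  have hfP : ∀ p, f (P p) = P (tw p) := by
    intro p; simp only [hf, hsymmP]
  have hinvol : ∀ k, f (f k) = k := by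
    intro k
    simp only [hf, hsymmP, htww, hPk]
  have hnofix : ∀ k, f k ≠ k := by
    intro k hk
    simp only [hf] at hk
    have h1 := hPinj (hk.trans (hPk k).symm)
    have h2 := congrArg Prod.snd h1
    simp [htw] at h2
  refine ⟨n, ⟨f, hinvol, hnofix⟩, ?_⟩
  set D : ChordDiagram n := ⟨f, hinvol, hnofix⟩ with hD
  have hDf : ∀ k, D.f k = f k := fun _ => rfl
  have hfPb : ∀ (w : V) (s : Bool), D.f (P (w, s)) = P (w, !s) := by
    intro w s
    rw [hDf, hfP]
  set φ : V → D.Chord := fun w =>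
    ⟨{P (w, false), P (w, true)}, ⟨P (w, false), by rw [hfPb]; rfl⟩⟩ with hφ
  have hφ1 : ∀ w, (φ w).1 = {P (w, false), P (w, true)} := fun _ => rfl
  have hφinj : Function.Injective φ := by
    intro x y h
    have h1 := congrArg Subtype.val h
    rw [hφ1, hφ1] at h1
    have h2 : P (x, false) ∈ ({P (y, false), P (y, true)} : Finset _) := by
      rw [← h1]; simp
    simp only [Finset.mem_insert, Finset.mem_singleton] at h2
    rcases h2 with h2 | h2
    · exact congrArg Prod.fst (hPinj h2)
    · have := congrArg Prod.snd (hPinj h2)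
      simp at this
  have hφsurj : Function.Surjective φ := by
    rintro ⟨s, k, hs⟩
    obtain ⟨w, b, hwb⟩ : ∃ w b, eqP.symm k = (w, b) := ⟨_, _, rfl⟩
    have hk : P (w, b) = k := by
      have h0 := hPk k
      rw [hwb] at h0
      exact h0
    have hfk : D.f k = P (w, !b) := by rw [← hk, hfPb]
    refine ⟨w, Subtype.ext ?_⟩
    show ({P (w, false), P (w, true)} : Finset _) = s
    rw [hs, ← hk, hfPb]
    cases b
    · rfl
    · exact Finset.pair_comm _ _
  have hdist : ∀ (x y : V), x ≠ y → ∀ s t : Bool, L.e (x, s) ≠ L.e (y, t) := by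
    intro x y hxy s t h
    exact hxy (congrArg Prod.fst (L.inj h))
  have altIl : ∀ (x y : V), x ≠ y →
      ((∃ s t : Bool, ChordDiagram.alternate
          (P (x, s)) (P (x, !s)) (P (y, t)) (P (y, !t))) ↔
        Il (L.e (x, false), L.e (x, true)) (L.e (y, false), L.e (y, true))) := by
    intro x y hxy
    have b1 := L.lt (x, false); have b2 := L.lt (x, true)
    have b3 := L.lt (y, false); have b4 := L.lt (y, true)
    have o1 := L.ord x; have o2 := L.ord y
    have d1 := hdist x y hxy false false
    have d2 := hdist x y hxy false true
    have d3 := hdist x y hxy true false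
    have d4 := hdist x y hxy true true
    constructor
    · rintro ⟨s, t, h⟩
      unfold ChordDiagram.alternate Xor' Xor at h
      cases s <;> cases t <;>
        simp only [Bool.not_false, Bool.not_true, hP] at h <;>
        rw [between_cast hN _ _ _ (L.lt _) (L.lt _) (L.lt _),
          between_cast hN _ _ _ (L.lt _) (L.lt _) (L.lt _)] at h <;>
        (dsimp only [Il]; omega)
    · intro h
      refine ⟨false, false, ?_⟩
      unfold ChordDiagram.alternate Xor' Xor
      simp only [Bool.not_false, hP]
      rw [between_cast hN _ _ _ (L.lt _) (L.lt _) (L.lt _),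
        between_cast hN _ _ _ (L.lt _) (L.lt _) (L.lt _)]
      dsimp only [Il] at h
      omega
  have Rchar : ∀ x y : V, x ≠ y →
      ((∃ a b, (φ x).1 = {a, D.f a} ∧ (φ y).1 = {b, D.f b} ∧
          ChordDiagram.alternate a (D.f a) b (D.f b)) ↔
        Il (L.e (x, false), L.e (x, true)) (L.e (y, false), L.e (y, true))) := by
    intro x y hxy
    rw [← altIl x y hxy]
    constructor
    · rintro ⟨a, b, h1, h2, h3⟩
      rw [hφ1] at h1 h2
      have ha : a ∈ ({P (x, false), P (x, true)} : Finset _) := by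
        rw [h1]; exact Finset.mem_insert_self _ _
      have hb : b ∈ ({P (y, false), P (y, true)} : Finset _) := by
        rw [h2]; exact Finset.mem_insert_self _ _
      simp only [Finset.mem_insert, Finset.mem_singleton] at ha hb
      obtain ⟨s, hs⟩ : ∃ s : Bool, a = P (x, s) := by
        rcases ha with h | h
        exacts [⟨false, h⟩, ⟨true, h⟩]
      obtain ⟨t, ht⟩ : ∃ t : Bool, b = P (y, t) := by
        rcases hb with h | h
        exacts [⟨false, h⟩, ⟨true, h⟩]
      refine ⟨s, t, ?_⟩
      rw [hs, ht, hfPb, hfPb] at h3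
      exact h3
    · rintro ⟨s, t, h⟩
      refine ⟨P (x, s), P (y, t), ?_, ?_, ?_⟩
      · rw [hφ1, hfPb]
        cases s
        · rfl
        · exact Finset.pair_comm _ _
      · rw [hφ1, hfPb]
        cases t
        · rfl
        · exact Finset.pair_comm _ _
      · rw [hfPb, hfPb]
        exact h
  have main : ∀ x y : V, D.graph.Adj (φ x) (φ y) ↔ G.Adj x y := by
    intro x y
    simp only [ChordDiagram.graph, SimpleGraph.fromRel_adj]
    by_cases hxy : x = y
    · subst hxy
      simp [G.irrefl]
    · have h1 : φ x ≠ φ y := fun h => hxy (hφinj h)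
      rw [Rchar x y hxy, Rchar y x (Ne.symm hxy), L.adj x y]
      have := @Il_symm (L.e (y, false), L.e (y, true)) (L.e (x, false), L.e (x, true))
      constructor
      · rintro ⟨-, h | h⟩
        · exact h
        · exact this.mp h
      · intro h
        exact ⟨h1, Or.inl h⟩
  set eqv := Equiv.ofBijective φ ⟨hφinj, hφsurj⟩ with heqv
  refine ⟨⟨eqv.symm, ?_⟩⟩
  intro s t
  obtain ⟨x, rfl⟩ : ∃ x, φ x = s := ⟨eqv.symm s, eqv.apply_symm_apply s⟩
  obtain ⟨y, rfl⟩ : ∃ y, φ y = t := ⟨eqv.symm t, eqv.apply_symm_apply t⟩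
  have hx : eqv.symm (φ x) = x := eqv.symm_apply_apply x
  have hy : eqv.symm (φ y) = y := eqv.symm_apply_apply y
  rw [hx, hy]
  exact (main x y).symm

/-- Every finite tree is the intersection graph of some chord diagram. -/
theorem tree_is_intersection_graph (V : Type) [Fintype V] (G : SimpleGraph V)
    (hT : G.IsTree) :
    ∃ (n : ℕ) (D : ChordDiagram n), Nonempty (D.graph ≃g G) := by
  haveI : Nonempty V := hT.isConnected.nonempty
  obtain ⟨L⟩ := layout_exists (Fintype.card V) V G hT rfl
  exact assemble V G L
end

section
/- There exists a simple graph on 6 vertices that is not the intersection graph of any chord diagram. -/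
namespace W5NC

open ChordDiagram

abbrev Z12 := ZMod 12

/-! ### The wheel `W₅`: a 5-cycle on `0,…,4` together with the hub `5`. -/

def W5 : SimpleGraph (Fin 6) where
  Adj i j := i ≠ j ∧ (i = 5 ∨ j = 5 ∨ (i.val + 1) % 5 = j.val ∨ (j.val + 1) % 5 = i.val)
  symm := by
    refine ⟨fun i j h => ?_⟩
    obtain ⟨h1, h2⟩ := h
    exact ⟨Ne.symm h1, by tauto⟩
  loopless := by
    refine ⟨fun i h => ?_⟩
    exact h.1 rfl

instance : DecidableRel W5.Adj := fun i j =>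
  inferInstanceAs (Decidable (_ ∧ _))

lemma W5_adj_hub : ∀ i : Fin 6, i ≠ 5 → W5.Adj 5 i := by decide

/-! ### Crossing of chords, in plain natural-number arithmetic (fast to decide) -/

def btwP (a x b : ℕ) : Prop :=
  0 < (x + 12 - a) % 12 ∧ (x + 12 - a) % 12 < (b + 12 - a) % 12

def altP (x x' y y' : ℕ) : Prop := Xor' (btwP x y x') (btwP x y' x')

/-- Chords `{x,x'}` and `{y,y'}` cross (symmetrized over all endpoint orderings). -/
def crossP (x x' y y' : ℕ) : Prop :=
  altP x x' y y' ∨ altP x x' y' y ∨ altP x' x y y' ∨ altP x' x y' y ∨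
  altP y y' x x' ∨ altP y y' x' x ∨ altP y' y x x' ∨ altP y' y x' x

instance (a x b : ℕ) : Decidable (btwP a x b) := inferInstanceAs (Decidable (_ ∧ _))
instance (x x' y y' : ℕ) : Decidable (altP x x' y y') :=
  inferInstanceAs (Decidable (Xor _ _))
instance (x x' y y' : ℕ) : Decidable (crossP x x' y y') :=
  inferInstanceAs (Decidable (_ ∨ _))

instance {N : ℕ} (a x b : ZMod N) : Decidable (between a x b) :=
  inferInstanceAs (Decidable (_ ∧ _))
instance {N : ℕ} (a b c d : ZMod N) : Decidable (alternate a b c d) :=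
  inferInstanceAs (Decidable (Xor _ _))

/-- The same crossing relation, in terms of the original `alternate` on `ZMod 12`. -/
def crossZ (x x' y y' : Z12) : Prop :=
  alternate x x' y y' ∨ alternate x x' y' y ∨ alternate x' x y y' ∨ alternate x' x y' y ∨
  alternate y y' x x' ∨ alternate y y' x' x ∨ alternate y' y x x' ∨ alternate y' y x' x

lemma btwP_iff : ∀ a x b : Z12, btwP a.val x.val b.val ↔ between a x b := by decide

lemma altP_iff (x x' y y' : Z12) :
    altP x.val x'.val y.val y'.val ↔ alternate x x' y y' := by
  unfold altP ChordDiagram.alternate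
  rw [btwP_iff, btwP_iff]

lemma crossP_iff (x x' y y' : Z12) :
    crossP x.val x'.val y.val y'.val ↔ crossZ x x' y y' := by
  unfold crossP crossZ
  simp only [altP_iff]

/-! ### Invariance of crossing under rotation and endpoint swaps -/

lemma between_sub (t a x b : Z12) : between (a - t) (x - t) (b - t) ↔ between a x b := by
  unfold ChordDiagram.between
  rw [sub_sub_sub_cancel_right, sub_sub_sub_cancel_right]

lemma alternate_sub (t a b c d : Z12) :
    alternate (a - t) (b - t) (c - t) (d - t) ↔ alternate a b c d := by
  unfold ChordDiagram.alternate
  rw [between_sub, between_sub]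

lemma crossZ_sub (t x x' y y' : Z12) :
    crossZ (x - t) (x' - t) (y - t) (y' - t) ↔ crossZ x x' y y' := by
  unfold crossZ
  simp only [alternate_sub]

lemma crossZ_swapL (x x' y y' : Z12) : crossZ x' x y y' ↔ crossZ x x' y y' := by
  unfold crossZ; tauto

lemma crossZ_swapR (x x' y y' : Z12) : crossZ x x' y' y ↔ crossZ x x' y y' := by
  unfold crossZ; tauto

/-! ### Normalization of a family of chords: rotate so the hub starts at `0`,
and sort the two endpoints of each chord. -/

def T1 (p₁ : Fin 6 → Z12) (i : Fin 6) : Z12 := p₁ i - p₁ 5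
def T2 (p₁ p₂ : Fin 6 → Z12) (i : Fin 6) : Z12 := p₂ i - p₁ 5
def S1 (p₁ p₂ : Fin 6 → Z12) (i : Fin 6) : Z12 :=
  if (T1 p₁ i).val ≤ (T2 p₁ p₂ i).val then T1 p₁ i else T2 p₁ p₂ i
def S2 (p₁ p₂ : Fin 6 → Z12) (i : Fin 6) : Z12 :=
  if (T1 p₁ i).val ≤ (T2 p₁ p₂ i).val then T2 p₁ p₂ i else T1 p₁ i

lemma S_cases (p₁ p₂ : Fin 6 → Z12) (i : Fin 6) :
    (S1 p₁ p₂ i = T1 p₁ i ∧ S2 p₁ p₂ i = T2 p₁ p₂ i) ∨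
    (S1 p₁ p₂ i = T2 p₁ p₂ i ∧ S2 p₁ p₂ i = T1 p₁ i) := by
  unfold S1 S2
  by_cases h : (T1 p₁ i).val ≤ (T2 p₁ p₂ i).val
  · rw [if_pos h, if_pos h]; exact Or.inl ⟨rfl, rfl⟩
  · rw [if_neg h, if_neg h]; exact Or.inr ⟨rfl, rfl⟩

lemma S_val_lt (p₁ p₂ : Fin 6 → Z12) (i : Fin 6) (h : T1 p₁ i ≠ T2 p₁ p₂ i) :
    (S1 p₁ p₂ i).val < (S2 p₁ p₂ i).val := by
  unfold S1 S2
  by_cases hle : (T1 p₁ i).val ≤ (T2 p₁ p₂ i).val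
  · rw [if_pos hle, if_pos hle]
    exact lt_of_le_of_ne hle fun hv => h (ZMod.val_injective 12 hv)
  · rw [if_neg hle, if_neg hle]
    omega

lemma S1_five (p₁ p₂ : Fin 6 → Z12) : S1 p₁ p₂ 5 = 0 := by
  have h0 : T1 p₁ 5 = 0 := by unfold T1; exact sub_self _
  unfold S1
  rw [h0, if_pos (by simp [ZMod.val_zero])]

/-! ### The decidable search: no normalized configuration realizes `W₅`. -/

def P : Prop :=
  (∃ h : ℕ, h < 12 ∧ 0 < h ∧ (∃ a0 : ℕ, a0 < 12 ∧ a0 ≠ 0 ∧ a0 ≠ h ∧ (∃ b0 : ℕ, b0 < 12 ∧ b0 ≠ 0 ∧ b0 ≠ h ∧ a0 < b0 ∧ crossP 0 h a0 b0 ∧ (∃ a1 : ℕ, a1 < 12 ∧ a1 ≠ 0 ∧ a1 ≠ h ∧ a1 ≠ a0 ∧ a1 ≠ b0 ∧ (∃ b1 : ℕ, b1 < 12 ∧ b1 ≠ 0 ∧ b1 ≠ h ∧ b1 ≠ a0 ∧ b1 ≠ b0 ∧ a1 < b1 ∧ crossP 0 h a1 b1 ∧ crossP a0 b0 a1 b1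 ∧ (∃ a2 : ℕ, a2 < 12 ∧ a2 ≠ 0 ∧ a2 ≠ h ∧ a2 ≠ a0 ∧ a2 ≠ b0 ∧ a2 ≠ a1 ∧ a2 ≠ b1 ∧ (∃ b2 : ℕ, b2 < 12 ∧ b2 ≠ 0 ∧ b2 ≠ h ∧ b2 ≠ a0 ∧ b2 ≠ b0 ∧ b2 ≠ a1 ∧ b2 ≠ b1 ∧ a2 < b2 ∧ crossP 0 h a2 b2 ∧ ¬ crossP a0 b0 a2 b2 ∧ crossP a1 b1 a2 b2 ∧ (∃ a3 : ℕ, a3 < 12 ∧ a3 ≠ 0 ∧ a3 ≠ h ∧ a3 ≠ a0 ∧ a3 ≠ b0 ∧ a3 ≠ a1 ∧ a3 ≠ b1 ∧ a3 ≠ a2 ∧ a3 ≠ b2 ∧ (∃ b3 : ℕ, b3 < 12 ∧ b3 ≠ 0 ∧ b3 ≠ h ∧ b3 ≠ a0 ∧ b3 ≠ b0 ∧ b3 ≠ a1 ∧ b3 ≠ b1 ∧ b3 ≠ a2 ∧ b3 ≠ b2 ∧ a3 < b3 ∧ crossP 0 h a3 b3 ∧ ¬ crossP a0 b0 a3 b3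 ∧ ¬ crossP a1 b1 a3 b3 ∧ crossP a2 b2 a3 b3 ∧ (∃ a4 : ℕ, a4 < 12 ∧ a4 ≠ 0 ∧ a4 ≠ h ∧ a4 ≠ a0 ∧ a4 ≠ b0 ∧ a4 ≠ a1 ∧ a4 ≠ b1 ∧ a4 ≠ a2 ∧ a4 ≠ b2 ∧ a4 ≠ a3 ∧ a4 ≠ b3 ∧ (∃ b4 : ℕ, b4 < 12 ∧ b4 ≠ 0 ∧ b4 ≠ h ∧ b4 ≠ a0 ∧ b4 ≠ b0 ∧ b4 ≠ a1 ∧ b4 ≠ b1 ∧ b4 ≠ a2 ∧ b4 ≠ b2 ∧ b4 ≠ a3 ∧ b4 ≠ b3 ∧ a4 < b4 ∧ crossP 0 h a4 b4 ∧ crossP a0 b0 a4 b4 ∧ ¬ crossP a1 b1 a4 b4 ∧ ¬ crossP a2 b2 a4 b4 ∧ crossP a3 b3 a4 b4)))))))))))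

def chk : Bool :=
  ((List.range 12).any fun h => (decide (0 < h) && ((List.range 12).any fun a0 => (decide (a0 ≠ 0) && (decide (a0 ≠ h) && ((List.range 12).any fun b0 => (decide (b0 ≠ 0) && (decide (b0 ≠ h) && (decide (a0 < b0) && (decide (crossP 0 h a0 b0) && ((List.range 12).any fun a1 => (decide (a1 ≠ 0) && (decide (a1 ≠ h) && (decide (a1 ≠ a0) && (decide (a1 ≠ b0) && ((List.range 12).any fun b1 => (decide (b1 ≠ 0) && (decide (b1 ≠ h) && (decide (b1 ≠ a0) && (decide (b1 ≠ b0) && (decide (a1 < b1) && (decide (crossP 0 h a1 b1) && (decide (crossP a0 b0 a1 b1) && ((List.range 12).any fun a2 => (decide (a2 ≠ 0) && (decide (a2 ≠ h) && (decide (a2 ≠ a0) && (decide (a2 ≠ b0) && (decide (a2 ≠ a1) && (decide (a2 ≠ b1) && ((List.range 12).any fun b2 => (decide (b2 ≠ 0) && (decide (b2 ≠ h) && (decide (b2 ≠ a0) && (decide (b2 ≠ b0) && (decide (b2 ≠ a1) && (decide (b2 ≠ b1) && (decide (a2 < b2) && (decide (crossP 0 h a2 b2) && (decide (¬ crossP a0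 b0 a2 b2) && (decide (crossP a1 b1 a2 b2) && ((List.range 12).any fun a3 => (decide (a3 ≠ 0) && (decide (a3 ≠ h) && (decide (a3 ≠ a0) && (decide (a3 ≠ b0) && (decide (a3 ≠ a1) && (decide (a3 ≠ b1) && (decide (a3 ≠ a2) && (decide (a3 ≠ b2) && ((List.range 12).any fun b3 => (decide (b3 ≠ 0) && (decide (b3 ≠ h) && (decide (b3 ≠ a0) && (decide (b3 ≠ b0) && (decide (b3 ≠ a1) && (decide (b3 ≠ b1) && (decide (b3 ≠ a2) && (decide (b3 ≠ b2) && (decide (a3 < b3) && (decide (crossP 0 h a3 b3) && (decide (¬ crossP a0 b0 a3 b3) && (decide (¬ crossP a1 b1 a3 b3) && (decide (crossP a2 b2 a3 b3) && ((List.range 12).any fun a4 => (decide (a4 ≠ 0) && (decide (a4 ≠ h) && (decide (a4 ≠ a0) && (decide (a4 ≠ b0) && (decide (a4 ≠ a1) && (decide (a4 ≠ b1) && (decide (a4 ≠ a2) && (decide (a4 ≠ b2) && (decide (a4 ≠ a3) && (decide (a4 ≠ b3) && ((List.range 12).any fun b4 => (decide (b4 ≠ 0) && (decide (b4 ≠ h)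 && (decide (b4 ≠ a0) && (decide (b4 ≠ b0) && (decide (b4 ≠ a1) && (decide (b4 ≠ b1) && (decide (b4 ≠ a2) && (decide (b4 ≠ b2) && (decide (b4 ≠ a3) && (decide (b4 ≠ b3) && (decide (a4 < b4) && (decide (crossP 0 h a4 b4) && (decide (crossP a0 b0 a4 b4) && (decide (¬ crossP a1 b1 a4 b4) && (decide (¬ crossP a2 b2 a4 b4) && decide (crossP a3 b3 a4 b4))))))))))))))))))))))))))))))))))))))))))))))))))))))))))))))))))))))))))))))))))))))))))))

set_option maxHeartbeats 1600000 in
lemma chk_false : chk = false := by decide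

lemma chk_iff : chk = true ↔ P := by
  simp only [chk, P, List.any_eq_true, List.mem_range, Bool.and_eq_true, decide_eq_true_eq]

lemma noP : ¬ P := fun hp => by
  have h := chk_iff.mpr hp
  rw [chk_false] at h
  exact Bool.noConfusion h

/-! ### No family of six pairwise disjoint chords has `W₅` as its crossing pattern. -/

lemma no_good_family (p₁ p₂ : Fin 6 → Z12)
    (hne : ∀ i, p₁ i ≠ p₂ i)
    (hd : ∀ i j : Fin 6, i ≠ j →
      (p₁ i ≠ p₁ j ∧ p₁ i ≠ p₂ j ∧ p₂ i ≠ p₁ j ∧ p₂ i ≠ p₂ j))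
    (hcr : ∀ i j : Fin 6, i ≠ j →
      (crossZ (p₁ i) (p₂ i) (p₁ j) (p₂ j) ↔ W5.Adj i j)) : False := by
  have hTne : ∀ i, T1 p₁ i ≠ T2 p₁ p₂ i := by
    intro i hEq
    apply hne i
    simp only [T1, T2] at hEq
    exact sub_left_inj.mp hEq
  have hTd : ∀ i j : Fin 6, i ≠ j →
      (T1 p₁ i ≠ T1 p₁ j ∧ T1 p₁ i ≠ T2 p₁ p₂ j ∧
       T2 p₁ p₂ i ≠ T1 p₁ j ∧ T2 p₁ p₂ i ≠ T2 p₁ p₂ j) := by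
    intro i j hij
    obtain ⟨h1, h2, h3, h4⟩ := hd i j hij
    simp only [T1, T2]
    exact ⟨fun hq => h1 (sub_left_inj.mp hq), fun hq => h2 (sub_left_inj.mp hq),
      fun hq => h3 (sub_left_inj.mp hq), fun hq => h4 (sub_left_inj.mp hq)⟩
  have hTcr : ∀ i j : Fin 6, i ≠ j →
      (crossZ (T1 p₁ i) (T2 p₁ p₂ i) (T1 p₁ j) (T2 p₁ p₂ j) ↔ W5.Adj i j) := by
    intro i j hij
    simp only [T1, T2]
    rw [crossZ_sub]
    exact hcr i j hij
  have hSne : ∀ i, S1 p₁ p₂ i ≠ S2 p₁ p₂ i := by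
    intro i
    rcases S_cases p₁ p₂ i with ⟨h1, h2⟩ | ⟨h1, h2⟩ <;> rw [h1, h2]
    · exact hTne i
    · exact Ne.symm (hTne i)
  have hSd : ∀ i j : Fin 6, i ≠ j →
      (S1 p₁ p₂ i ≠ S1 p₁ p₂ j ∧ S1 p₁ p₂ i ≠ S2 p₁ p₂ j ∧
       S2 p₁ p₂ i ≠ S1 p₁ p₂ j ∧ S2 p₁ p₂ i ≠ S2 p₁ p₂ j) := by
    intro i j hij
    have H := hTd i j hij
    rcases S_cases p₁ p₂ i with ⟨h1, h2⟩ | ⟨h1, h2⟩ <;>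
      rcases S_cases p₁ p₂ j with ⟨h3, h4⟩ | ⟨h3, h4⟩ <;>
      rw [h1, h2, h3, h4] <;> tauto
  have hScr : ∀ i j : Fin 6, i ≠ j →
      (crossZ (S1 p₁ p₂ i) (S2 p₁ p₂ i) (S1 p₁ p₂ j) (S2 p₁ p₂ j) ↔ W5.Adj i j) := by
    intro i j hij
    rcases S_cases p₁ p₂ i with ⟨h1, h2⟩ | ⟨h1, h2⟩ <;>
      rcases S_cases p₁ p₂ j with ⟨h3, h4⟩ | ⟨h3, h4⟩ <;> rw [h1, h2, h3, h4]
    · exact hTcr i j hij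
    · rw [crossZ_swapR]; exact hTcr i j hij
    · rw [crossZ_swapL]; exact hTcr i j hij
    · rw [crossZ_swapL, crossZ_swapR]; exact hTcr i j hij
  -- pass to values in ℕ
  have vinj : Function.Injective (ZMod.val : Z12 → ℕ) := ZMod.val_injective 12
  have hb1 : ∀ i, (S1 p₁ p₂ i).val < 12 := fun i => ZMod.val_lt _
  have hb2 : ∀ i, (S2 p₁ p₂ i).val < 12 := fun i => ZMod.val_lt _
  have hordv : ∀ i, (S1 p₁ p₂ i).val < (S2 p₁ p₂ i).val := fun i => S_val_lt p₁ p₂ i (hTne i)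
  have hzv : (S1 p₁ p₂ 5).val = 0 := by rw [S1_five]; exact ZMod.val_zero
  have hDv : ∀ i j : Fin 6, i ≠ j →
      ((S1 p₁ p₂ i).val ≠ (S1 p₁ p₂ j).val ∧ (S1 p₁ p₂ i).val ≠ (S2 p₁ p₂ j).val ∧
       (S2 p₁ p₂ i).val ≠ (S1 p₁ p₂ j).val ∧ (S2 p₁ p₂ i).val ≠ (S2 p₁ p₂ j).val) := by
    intro i j hij
    obtain ⟨h1, h2, h3, h4⟩ := hSd i j hij
    exact ⟨fun hv => h1 (vinj hv), fun hv => h2 (vinj hv),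
      fun hv => h3 (vinj hv), fun hv => h4 (vinj hv)⟩
  have hD0v : ∀ i : Fin 6, i ≠ 5 → ((S1 p₁ p₂ i).val ≠ 0 ∧ (S2 p₁ p₂ i).val ≠ 0) := by
    intro i hi
    rw [← hzv]
    exact ⟨(hDv i 5 hi).1, (hDv i 5 hi).2.2.1⟩
  have hpos : 0 < (S2 p₁ p₂ 5).val := by
    rw [← hzv]; exact hordv 5
  have hCv : ∀ i j : Fin 6, i ≠ j →
      (crossP (S1 p₁ p₂ i).val (S2 p₁ p₂ i).val (S1 p₁ p₂ j).val (S2 p₁ p₂ j).val ↔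
        W5.Adj i j) := fun i j hij => (crossP_iff _ _ _ _).trans (hScr i j hij)
  have hcH : ∀ i : Fin 6, i ≠ 5 →
      crossP 0 (S2 p₁ p₂ 5).val (S1 p₁ p₂ i).val (S2 p₁ p₂ i).val := by
    intro i hi
    rw [← hzv]
    exact (hCv 5 i (Ne.symm hi)).mpr (W5_adj_hub i hi)
  exact noP ⟨(S2 p₁ p₂ 5).val,
    hb2 5,
    hpos,
    (S1 p₁ p₂ 0).val,
    hb1 0,
    (hD0v 0 (by decide)).1,
    (hDv 0 5 (by decide)).2.1,
    (S2 p₁ p₂ 0).val,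
    hb2 0,
    (hD0v 0 (by decide)).2,
    (hDv 0 5 (by decide)).2.2.2,
    hordv 0,
    hcH 0 (by decide),
    (S1 p₁ p₂ 1).val,
    hb1 1,
    (hD0v 1 (by decide)).1,
    (hDv 1 5 (by decide)).2.1,
    (hDv 1 0 (by decide)).1,
    (hDv 1 0 (by decide)).2.1,
    (S2 p₁ p₂ 1).val,
    hb2 1,
    (hD0v 1 (by decide)).2,
    (hDv 1 5 (by decide)).2.2.2,
    (hDv 1 0 (by decide)).2.2.1,
    (hDv 1 0 (by decide)).2.2.2,
    hordv 1,
    hcH 1 (by decide),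
    (hCv 0 1 (by decide)).mpr (by decide),
    (S1 p₁ p₂ 2).val,
    hb1 2,
    (hD0v 2 (by decide)).1,
    (hDv 2 5 (by decide)).2.1,
    (hDv 2 0 (by decide)).1,
    (hDv 2 0 (by decide)).2.1,
    (hDv 2 1 (by decide)).1,
    (hDv 2 1 (by decide)).2.1,
    (S2 p₁ p₂ 2).val,
    hb2 2,
    (hD0v 2 (by decide)).2,
    (hDv 2 5 (by decide)).2.2.2,
    (hDv 2 0 (by decide)).2.2.1,
    (hDv 2 0 (by decide)).2.2.2,
    (hDv 2 1 (by decide)).2.2.1,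
    (hDv 2 1 (by decide)).2.2.2,
    hordv 2,
    hcH 2 (by decide),
    fun hc => absurd ((hCv 0 2 (by decide)).mp hc) (by decide),
    (hCv 1 2 (by decide)).mpr (by decide),
    (S1 p₁ p₂ 3).val,
    hb1 3,
    (hD0v 3 (by decide)).1,
    (hDv 3 5 (by decide)).2.1,
    (hDv 3 0 (by decide)).1,
    (hDv 3 0 (by decide)).2.1,
    (hDv 3 1 (by decide)).1,
    (hDv 3 1 (by decide)).2.1,
    (hDv 3 2 (by decide)).1,
    (hDv 3 2 (by decide)).2.1,
    (S2 p₁ p₂ 3).val,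
    hb2 3,
    (hD0v 3 (by decide)).2,
    (hDv 3 5 (by decide)).2.2.2,
    (hDv 3 0 (by decide)).2.2.1,
    (hDv 3 0 (by decide)).2.2.2,
    (hDv 3 1 (by decide)).2.2.1,
    (hDv 3 1 (by decide)).2.2.2,
    (hDv 3 2 (by decide)).2.2.1,
    (hDv 3 2 (by decide)).2.2.2,
    hordv 3,
    hcH 3 (by decide),
    fun hc => absurd ((hCv 0 3 (by decide)).mp hc) (by decide),
    fun hc => absurd ((hCv 1 3 (by decide)).mp hc) (by decide),
    (hCv 2 3 (by decide)).mpr (by decide),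
    (S1 p₁ p₂ 4).val,
    hb1 4,
    (hD0v 4 (by decide)).1,
    (hDv 4 5 (by decide)).2.1,
    (hDv 4 0 (by decide)).1,
    (hDv 4 0 (by decide)).2.1,
    (hDv 4 1 (by decide)).1,
    (hDv 4 1 (by decide)).2.1,
    (hDv 4 2 (by decide)).1,
    (hDv 4 2 (by decide)).2.1,
    (hDv 4 3 (by decide)).1,
    (hDv 4 3 (by decide)).2.1,
    (S2 p₁ p₂ 4).val,
    hb2 4,
    (hD0v 4 (by decide)).2,
    (hDv 4 5 (by decide)).2.2.2,
    (hDv 4 0 (by decide)).2.2.1,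
    (hDv 4 0 (by decide)).2.2.2,
    (hDv 4 1 (by decide)).2.2.1,
    (hDv 4 1 (by decide)).2.2.2,
    (hDv 4 2 (by decide)).2.2.1,
    (hDv 4 2 (by decide)).2.2.2,
    (hDv 4 3 (by decide)).2.2.1,
    (hDv 4 3 (by decide)).2.2.2,
    hordv 4,
    hcH 4 (by decide),
    (hCv 0 4 (by decide)).mpr (by decide),
    fun hc => absurd ((hCv 1 4 (by decide)).mp hc) (by decide),
    fun hc => absurd ((hCv 2 4 (by decide)).mp hc) (by decide),
    (hCv 3 4 (by decide)).mpr (by decide)⟩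

end W5NC

/-- There is a simple graph on 6 vertices that is not the intersection graph of any
chord diagram. -/
theorem exists_non_circle_graph_on_six_vertices :
    ∃ G : SimpleGraph (Fin 6), ∀ (n : ℕ) (D : ChordDiagram n),
      IsEmpty (D.graph ≃g G) := by
  classical
  refine ⟨W5NC.W5, fun n D => ⟨fun e => ?_⟩⟩
  haveI : Fintype D.Chord := Fintype.ofEquiv (Fin 6) e.toEquiv.symm
  have hcard : Fintype.card D.Chord = 6 := by
    rw [Fintype.card_congr e.toEquiv, Fintype.card_fin]
  have hmem : ∀ x : ZMod (2 * n), ∃ s : D.Chord, x ∈ s.1 := fun x =>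
    ⟨⟨{x, D.f x}, ⟨x, rfl⟩⟩, Finset.mem_insert_self _ _⟩
  have hrep : ∀ x k : ZMod (2 * n), x ∈ ({k, D.f k} : Finset (ZMod (2 * n))) →
      ({x, D.f x} : Finset (ZMod (2 * n))) = {k, D.f k} := by
    intro x k hx
    rcases Finset.mem_insert.1 hx with h | h
    · subst h; rfl
    · rw [Finset.mem_singleton] at h
      subst h
      rw [D.invol, Finset.pair_comm]
  rcases n with - | m
  · -- `n = 0` is impossible: `ZMod 0 = ℤ` is infinite but covered by six finite chords.
    have hfin : (Set.univ : Set (ZMod (2 * 0))).Finite := by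
      refine Set.Finite.subset
        (Set.finite_iUnion fun s : D.Chord => (s.1 : Finset (ZMod (2 * 0))).finite_toSet) ?_
      intro x _
      rcases hmem x with ⟨s, hs⟩
      exact Set.mem_iUnion.2 ⟨s, hs⟩
    haveI : Finite (ZMod (2 * 0)) := Set.finite_univ_iff.mp hfin
    haveI : Infinite (ZMod (2 * 0)) := inferInstanceAs (Infinite ℤ)
    exact not_finite (ZMod (2 * 0))
  · -- counting endpoints: `2 * (m + 1) = 12`, so `n = 6`.
    haveI : NeZero (2 * (m + 1)) := ⟨by omega⟩
    have hunion : (Finset.univ : Finset (ZMod (2 * (m + 1)))) =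
        Finset.univ.biUnion (fun s : D.Chord => s.1) := by
      refine Finset.Subset.antisymm (fun x _ => ?_) (Finset.subset_univ _)
      rcases hmem x with ⟨s, hs⟩
      exact Finset.mem_biUnion.2 ⟨s, Finset.mem_univ _, hs⟩
    have hdisj : ∀ s ∈ (Finset.univ : Finset D.Chord), ∀ t ∈ Finset.univ, s ≠ t →
        Disjoint s.1 t.1 := by
      intro s _ t _ hst
      rw [Finset.disjoint_left]
      intro x hxs hxt
      apply hst
      apply Subtype.ext
      obtain ⟨k, hk⟩ := s.2
      obtain ⟨l, hl⟩ := t.2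
      rw [hk, hl, ← hrep x k (hk ▸ hxs), ← hrep x l (hl ▸ hxt)]
    have hcount : 2 * (m + 1) = 12 := by
      have h1 : Fintype.card (ZMod (2 * (m + 1))) = 2 * (m + 1) := ZMod.card _
      have h2 : (Finset.univ : Finset (ZMod (2 * (m + 1)))).card =
          ∑ s : D.Chord, (s.1).card := by
        rw [hunion]; exact Finset.card_biUnion hdisj
      have h3 : ∀ s : D.Chord, (s.1).card = 2 := by
        intro s
        obtain ⟨k, hk⟩ := s.2
        rw [hk]
        exact Finset.card_pair (Ne.symm (D.noFix k))
      have h4 : ∑ s : D.Chord, (s.1).card = 12 := by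
        rw [Finset.sum_congr rfl fun s _ => h3 s, Finset.sum_const, Finset.card_univ, hcard]
        norm_num
      rw [← h1, ← Finset.card_univ, h2, h4]
    have hm : m = 5 := by omega
    subst hm
    -- extract the six chords as pairs of endpoints
    choose a ha using fun i : Fin 6 => (e.symm i).2
    have hinj : ∀ i j : Fin 6, i ≠ j → e.symm i ≠ e.symm j := fun i j hij hEq =>
      hij (e.symm.toEquiv.injective hEq)
    have hmem1 : ∀ i : Fin 6, a i ∈ (e.symm i).1 := fun i => by
      rw [ha i]; exact Finset.mem_insert_self _ _
    have hmem2 : ∀ i : Fin 6, D.f (a i) ∈ (e.symm i).1 := fun i => by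
      rw [ha i]; simp
    have hdisj2 : ∀ i j : Fin 6, i ≠ j → ∀ x, x ∈ (e.symm i).1 → x ∈ (e.symm j).1 →
        False := by
      intro i j hij x hxi hxj
      apply hinj i j hij
      apply Subtype.ext
      rw [ha i, ha j, ← hrep x (a i) (by rw [← ha i]; exact hxi),
        ← hrep x (a j) (by rw [← ha j]; exact hxj)]
    have hd : ∀ i j : Fin 6, i ≠ j →
        (a i ≠ a j ∧ a i ≠ D.f (a j) ∧ D.f (a i) ≠ a j ∧ D.f (a i) ≠ D.f (a j)) := by
      intro i j hij
      refine ⟨fun hq => hdisj2 i j hij (a i) (hmem1 i) ?_,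
        fun hq => hdisj2 i j hij (a i) (hmem1 i) ?_,
        fun hq => hdisj2 i j hij (D.f (a i)) (hmem2 i) ?_,
        fun hq => hdisj2 i j hij (D.f (a i)) (hmem2 i) ?_⟩
      · rw [hq]; exact hmem1 j
      · rw [hq]; exact hmem2 j
      · rw [hq]; exact hmem1 j
      · rw [hq]; exact hmem2 j
    have ha2 : ∀ i : Fin 6, (e.symm i).1 = {D.f (a i), D.f (D.f (a i))} := fun i => by
      rw [D.invol, Finset.pair_comm]; exact ha i
    have hadj : ∀ i j : Fin 6, D.graph.Adj (e.symm i) (e.symm j) ↔ W5NC.W5.Adj i j :=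
      fun i j => e.symm.map_adj_iff
    have hcr : ∀ i j : Fin 6, i ≠ j →
        (W5NC.crossZ (a i) (D.f (a i)) (a j) (D.f (a j)) ↔ W5NC.W5.Adj i j) := by
      intro i j hij
      rw [← hadj i j]
      constructor
      · intro hc
        have hAdj : (SimpleGraph.fromRel fun s t : D.Chord =>
            ∃ x y, s.1 = {x, D.f x} ∧ t.1 = {y, D.f y} ∧
              ChordDiagram.alternate x (D.f x) y (D.f y)).Adj (e.symm i) (e.symm j) := by
          rw [SimpleGraph.fromRel_adj]
          refine ⟨hinj i j hij, ?_⟩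
          rcases hc with h | h | h | h | h | h | h | h
          · exact Or.inl ⟨a i, a j, ha i, ha j, h⟩
          · refine Or.inl ⟨a i, D.f (a j), ha i, ha2 j, ?_⟩
            rw [D.invol]; exact h
          · refine Or.inl ⟨D.f (a i), a j, ha2 i, ha j, ?_⟩
            rw [D.invol]; exact h
          · refine Or.inl ⟨D.f (a i), D.f (a j), ha2 i, ha2 j, ?_⟩
            rw [D.invol, D.invol]; exact h
          · exact Or.inr ⟨a j, a i, ha j, ha i, h⟩
          · refine Or.inr ⟨a j, D.f (a i), ha j, ha2 i, ?_⟩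
            rw [D.invol]; exact h
          · refine Or.inr ⟨D.f (a j), a i, ha2 j, ha i, ?_⟩
            rw [D.invol]; exact h
          · refine Or.inr ⟨D.f (a j), D.f (a i), ha2 j, ha2 i, ?_⟩
            rw [D.invol, D.invol]; exact h
        exact hAdj
      · intro hAdj
        have h2 := (SimpleGraph.fromRel_adj _ _ _).mp hAdj
        rcases h2.2 with ⟨x, y, hx, hy, halt⟩ | ⟨x, y, hx, hy, halt⟩
        · have hx' : x = a i ∨ x = D.f (a i) := by
            have hm' : x ∈ (e.symm i).1 := by rw [hx]; exact Finset.mem_insert_self _ _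
            rw [ha i] at hm'; simpa using hm'
          have hy' : y = a j ∨ y = D.f (a j) := by
            have hm' : y ∈ (e.symm j).1 := by rw [hy]; exact Finset.mem_insert_self _ _
            rw [ha j] at hm'; simpa using hm'
          rcases hx' with rfl | rfl <;> rcases hy' with rfl | rfl
          · exact Or.inl halt
          · rw [D.invol] at halt
            exact Or.inr (Or.inl halt)
          · rw [D.invol] at halt
            exact Or.inr (Or.inr (Or.inl halt))
          · rw [D.invol, D.invol] at halt
            exact Or.inr (Or.inr (Or.inr (Or.inl halt)))
        · have hx' : x = a j ∨ x = D.f (a j) := by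
            have hm' : x ∈ (e.symm j).1 := by rw [hx]; exact Finset.mem_insert_self _ _
            rw [ha j] at hm'; simpa using hm'
          have hy' : y = a i ∨ y = D.f (a i) := by
            have hm' : y ∈ (e.symm i).1 := by rw [hy]; exact Finset.mem_insert_self _ _
            rw [ha i] at hm'; simpa using hm'
          rcases hx' with rfl | rfl <;> rcases hy' with rfl | rfl
          · exact Or.inr (Or.inr (Or.inr (Or.inr (Or.inl halt))))
          · rw [D.invol] at halt
            exact Or.inr (Or.inr (Or.inr (Or.inr (Or.inr (Or.inl halt)))))
          · rw [D.invol] at halt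
            exact Or.inr (Or.inr (Or.inr (Or.inr (Or.inr (Or.inr (Or.inl halt))))))
          · rw [D.invol, D.invol] at halt
            exact Or.inr (Or.inr (Or.inr (Or.inr (Or.inr (Or.inr (Or.inr halt))))))
    exact W5NC.no_good_family (fun i => a i) (fun i => D.f (a i))
      (fun i => Ne.symm (D.noFix (a i))) hd hcr
end
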